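/- arXiv:1901.07506 — 2 statements merged into one kernel-verified Lean document; each statement's English description precedes it below -/
import Mathlib

section
/- Let L ∈ ℕ, k > 0, a = (a_0, …, a_L) ∈ ℝ^{L+1}, and λ > 0. Then the derivative with respect to λ of g(a, λ) equals e^{−2λ} · yᵀ( (e^{λ}/k)·D + 1·zᵀ + z·1ᵀ )·y, where y, z ∈ ℝ^{L+1} are given by y_i = a_i λ^i and z_i = i/λ − 1 for i = 0, …, L, 1 ∈ ℝ^{L+1} is the all-ones vector, and D is the (L+1)×(L+1) diagonal matrix with D_{ii} = (i/λ − 1)·i!/λ^i. -/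
open Finset Matrix

/-- `P L a x = ∑_{l=0}^L a_l x^l`. -/
noncomputable def P (L : ℕ) (a : ℕ → ℝ) (x : ℝ) : ℝ :=
  ∑ l ∈ range (L + 1), a l * x ^ l

/-- `g(a, λ) = (1/k)·∑_{l=0}^L e^{−λ} a_l² λ^l l! + (e^{−λ} P_L(λ, a))²`. -/
noncomputable def g (k : ℝ) (L : ℕ) (a : ℕ → ℝ) (x : ℝ) : ℝ :=
  (1 / k) * (∑ l ∈ range (L + 1),
      Real.exp (-x) * (a l) ^ 2 * x ^ l * (l.factorial : ℝ))
    + (Real.exp (-x) * P L a x) ^ 2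

/-
With z_l = l/λ - 1 one has (e^{-λ} λ^l)' = e^{-λ} λ^l z_l, so each term of g differentiates
into a z-weighted copy of itself. Since a_l² λ^l l! = y_l² · l!/λ^l, the first sum yields the
diagonal form; since 1ᵀy = P_L(λ, a), the derivative 2 (e^{-λ} P_L) · e^{-λ} zᵀy of the square
is the symmetric rank-two form yᵀ(1zᵀ + z1ᵀ)y.
-/

theorem hasDerivAt_exp_neg_mul_pow (n : ℕ) {x : ℝ} (hx : x ≠ 0) :
    HasDerivAt (fun t => Real.exp (-t) * t ^ n)
      (Real.exp (-x) * x ^ n * ((n : ℝ) / x - 1)) x := by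
  have hexp : HasDerivAt (fun t => Real.exp (-t)) (-Real.exp (-x)) x := by
    simpa using (hasDerivAt_neg x).exp
  refine (hexp.mul (hasDerivAt_pow n x)).congr_deriv ?_
  rcases n with _ | n
  · simp
  · rw [Nat.add_sub_cancel]
    field_simp
    ring

theorem hasDerivAt_exp_neg_mul_P (L : ℕ) (a : ℕ → ℝ) {x : ℝ} (hx : x ≠ 0) :
    HasDerivAt (fun t => Real.exp (-t) * P L a t)
      (Real.exp (-x) * ∑ l ∈ range (L + 1), a l * x ^ l * ((l : ℝ) / x - 1)) x := by
  have hfun : (fun t => Real.exp (-t) * P L a t) =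
      fun t => ∑ l ∈ range (L + 1), a l * (Real.exp (-t) * t ^ l) := by
    ext t
    simp only [P, mul_sum]
    exact sum_congr rfl fun l _ => by ring
  rw [hfun, mul_sum]
  refine (HasDerivAt.fun_sum fun l _ =>
    (hasDerivAt_exp_neg_mul_pow l hx).const_mul (a l)).congr_deriv ?_
  exact sum_congr rfl fun l _ => by ring

theorem hasDerivAt_g (k : ℝ) (L : ℕ) (a : ℕ → ℝ) {x : ℝ} (hx : x ≠ 0) :
    HasDerivAt (g k L a)
      ((1 / k) * Real.exp (-x) * ∑ l ∈ range (L + 1),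
          x ^ l * ((l : ℝ) / x - 1) * a l ^ 2 * (l.factorial : ℝ) +
        2 * (Real.exp (-x) * P L a x) *
          (Real.exp (-x) * ∑ l ∈ range (L + 1), a l * x ^ l * ((l : ℝ) / x - 1))) x := by
  have hfun : g k L a = fun t => (1 / k) * ∑ l ∈ range (L + 1),
      Real.exp (-t) * t ^ l * a l ^ 2 * (l.factorial : ℝ) + (Real.exp (-t) * P L a t) ^ 2 := by
    ext t
    simp only [g]
    congr 2
    exact sum_congr rfl fun l _ => by ring
  rw [hfun]
  have hsum := HasDerivAt.fun_sum (u := range (L + 1)) fun l _ =>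
    ((hasDerivAt_exp_neg_mul_pow l hx).mul_const (a l ^ 2)).mul_const (l.factorial : ℝ)
  refine ((hsum.const_mul (1 / k)).add
    ((hasDerivAt_exp_neg_mul_P L a hx).pow 2)).congr_deriv ?_
  norm_num [mul_sum, mul_assoc]

theorem dotProduct_diagonal_mulVec_self {ι R : Type*} [Fintype ι] [DecidableEq ι]
    [CommSemiring R] (d y : ι → R) : y ⬝ᵥ (diagonal d *ᵥ y) = ∑ i, d i * y i ^ 2 := by
  simp only [dotProduct, mulVec_diagonal]
  exact sum_congr rfl fun i _ => by ring

theorem dotProduct_vecMulVec_mulVec {ι R : Type*} [Fintype ι] [CommSemiring R]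
    (u v w y : ι → R) : y ⬝ᵥ (vecMulVec u v *ᵥ w) = (y ⬝ᵥ u) * (v ⬝ᵥ w) := by
  simp only [vecMulVec_mulVec, op_smul_eq_smul, dotProduct_smul, smul_eq_mul, mul_comm]

theorem stmt_3_general (L : ℕ) (k : ℝ) (a : ℕ → ℝ) (x : ℝ) (hx : 0 < x) :
    HasDerivAt (g k L a)
      (Real.exp (-(2 * x)) *
        dotProduct (fun i : Fin (L + 1) => a i * x ^ (i : ℕ))
          (Matrix.mulVec
            ((Real.exp x / k) •
                Matrix.diagonal
                  (fun i : Fin (L + 1) =>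
                    (((i : ℕ) : ℝ) / x - 1) * ((i : ℕ).factorial : ℝ) / x ^ (i : ℕ)) +
              (Matrix.vecMulVec (fun _ : Fin (L + 1) => (1 : ℝ))
                  (fun i : Fin (L + 1) => ((i : ℕ) : ℝ) / x - 1) +
                Matrix.vecMulVec (fun i : Fin (L + 1) => ((i : ℕ) : ℝ) / x - 1)
                  (fun _ : Fin (L + 1) => (1 : ℝ))))
            (fun i : Fin (L + 1) => a i * x ^ (i : ℕ)))) x := by
  refine (hasDerivAt_g k L a hx.ne').congr_deriv ?_
  rw [add_mulVec, add_mulVec, smul_mulVec, dotProduct_add, dotProduct_add, dotProduct_smul,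
    dotProduct_diagonal_mulVec_self, dotProduct_vecMulVec_mulVec, dotProduct_vecMulVec_mulVec,
    dotProduct_comm (fun i : Fin (L + 1) => ((i : ℕ) : ℝ) / x - 1)]
  simp only [P, Finset.sum_range, dotProduct, mul_one, one_mul, smul_eq_mul]
  have hdiag : ∀ i : Fin (L + 1),
      ((i : ℝ) / x - 1) * ((i : ℕ).factorial : ℝ) / x ^ (i : ℕ) * (a i * x ^ (i : ℕ)) ^ 2 =
        x ^ (i : ℕ) * ((i : ℝ) / x - 1) * a i ^ 2 * ((i : ℕ).factorial : ℝ) := fun i => by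
    field_simp
  rw [sum_congr rfl fun i _ => hdiag i]
  have h2 : Real.exp (-(2 * x)) = Real.exp (-x) * Real.exp (-x) := by
    rw [← Real.exp_add]; ring_nf
  rw [h2, Real.exp_neg]
  field_simp
  ring

theorem stmt_3 (L : ℕ) (k : ℝ) (hk : 0 < k) (a : ℕ → ℝ) (x : ℝ) (hx : 0 < x) :
    HasDerivAt (g k L a)
      (Real.exp (-(2 * x)) *
        dotProduct (fun i : Fin (L + 1) => a i * x ^ (i : ℕ))
          (Matrix.mulVec
            ((Real.exp x / k) •
                Matrix.diagonal
                  (fun i : Fin (L + 1) =>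
                    (((i : ℕ) : ℝ) / x - 1) * ((i : ℕ).factorial : ℝ) / x ^ (i : ℕ)) +
              (Matrix.vecMulVec (fun _ : Fin (L + 1) => (1 : ℝ))
                  (fun i : Fin (L + 1) => ((i : ℕ) : ℝ) / x - 1) +
                Matrix.vecMulVec (fun i : Fin (L + 1) => ((i : ℕ) : ℝ) / x - 1)
                  (fun _ : Fin (L + 1) => (1 : ℝ))))
            (fun i : Fin (L + 1) => a i * x ^ (i : ℕ)))) x :=
  stmt_3_general L k a x hx
end

section
/- Let L ∈ ℕ and a = (a_0, …, a_L) ∈ ℝ^{L+1} with a_0 = −1, and let n > 0 and k > 0 be real numbers. Let I be a finite index set, let λ : I → ℝ satisfy, for each i, either λ_i = 0 or λ_i ∈ [n/k, n], and let S = #{i ∈ I : λ_i > 0} with S ≥ 1. Let (N_i)_{i ∈ I} be independent random variables where N_i is Poisson with mean λ_i when λ_i > 0 and N_i = 0 almost surely when λ_i = 0, and let Ŝ = Σ_{i ∈ I} g_L(N_i). Then E[((Ŝ − S)/S)²] ≤ sup_{λ ∈ [n/k, n]} [ (1/S)·Σ_{l=0}^L e^{−λ} a_l² λ^l l! + (e^{−λ}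 P_L(λ, a))² ]. -/
/-!
Let `T = ∑ᵢ g_L(Nᵢ)`, `V(λ) = ∑ₗ e^{-λ} aₗ² λˡ l!` and `bᵢ = e^{-λᵢ} P_L(λᵢ, a)`. Since `g_L - 1`
is supported on `{0, …, L}`, a Poisson variable `N` of mean `λ` has `E[g_L(N) - 1] = e^{-λ} P_L(λ, a)`
and `E[(g_L(N) - 1)²] = V(λ)`, while inactive indices contribute nothing because
`g_L(0) = a₀ + 1 = 0`. Then `E[(T - S)²] = Var T + (E T - S)²`, where by independence `Var T` is
the sum of the variances, each at most the second moment `V(λᵢ)` about `1`, and Cauchy–Schwarz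
bounds the squared bias `(∑ bᵢ)²` by `S ∑ bᵢ²`. After dividing by `S²` the bound is the average
over the `S` active indices of `V(λᵢ)/S + bᵢ²`, each at most the supremum over `[n/k, n]`.
-/
open Finset MeasureTheory ProbabilityTheory

/-- The estimator function `g_L`: `g_L(j) = a_j·j! + 1` for `j ≤ L`, and `g_L(j) = 1`
for `j > L`. -/
noncomputable def gL (L : ℕ) (a : ℕ → ℝ) (j : ℕ) : ℝ :=
  if j ≤ L then a j * (j.factorial : ℝ) + 1 else 1

open scoped NNReal

lemma gL_sub_one (L : ℕ) (a : ℕ → ℝ) (j : ℕ) :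
    gL L a j - 1 = if j ≤ L then a j * j.factorial else 0 := by
  unfold gL; split_ifs <;> ring

lemma gL_zero {L : ℕ} {a : ℕ → ℝ} (ha0 : a 0 = -1) : gL L a 0 = 0 := by
  simp [gL, ha0]

lemma abs_gL_le (L : ℕ) (a : ℕ → ℝ) (j : ℕ) :
    |gL L a j| ≤ ∑ l ∈ range (L + 1), |a l * l.factorial| + 1 := by
  calc |gL L a j| = |(gL L a j - 1) + 1| := by rw [sub_add_cancel]
    _ ≤ |gL L a j - 1| + 1 := (abs_add_le _ _).trans_eq (by rw [abs_one])
    _ ≤ ∑ l ∈ range (L + 1), |a l * l.factorial| + 1 := by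
      gcongr
      rw [gL_sub_one]
      split_ifs with hj
      · exact single_le_sum (f := fun l => |a l * l.factorial|) (fun _ _ => abs_nonneg _)
          (mem_range_succ_iff.mpr hj)
      · rw [abs_zero]; positivity

@[fun_prop]
lemma continuous_P (L : ℕ) (a : ℕ → ℝ) : Continuous (P L a) := by
  unfold P; fun_prop

lemma integral_poissonMeasure_of_support_subset (r : ℝ≥0) {f : ℕ → ℝ} {s : Finset ℕ}
    (hf : ∀ n ∉ s, f n = 0) :
    ∫ n, f n ∂poissonMeasure r = ∑ n ∈ s, Real.exp (-r) * r ^ n / n.factorial * f n := by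
  rw [integral_poissonMeasure, tsum_eq_sum (s := s) fun n hn => by simp [hf n hn]]
  simp only [smul_eq_mul]

lemma integral_gL_sub_one_poissonMeasure (L : ℕ) (a : ℕ → ℝ) (r : ℝ≥0) :
    ∫ j, (gL L a j - 1) ∂poissonMeasure r = Real.exp (-r) * P L a r := by
  rw [integral_poissonMeasure_of_support_subset r (s := range (L + 1)), P, mul_sum]
  · refine sum_congr rfl fun l hl => ?_
    rw [gL_sub_one, if_pos (mem_range_succ_iff.mp hl)]
    field_simp
  · intro j hj
    rw [gL_sub_one, if_neg (by simpa using hj)]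

lemma integral_gL_sub_one_sq_poissonMeasure (L : ℕ) (a : ℕ → ℝ) (r : ℝ≥0) :
    ∫ j, (gL L a j - 1) ^ 2 ∂poissonMeasure r
      = ∑ l ∈ range (L + 1), Real.exp (-r) * a l ^ 2 * r ^ l * l.factorial := by
  rw [integral_poissonMeasure_of_support_subset r (s := range (L + 1))]
  · refine sum_congr rfl fun l hl => ?_
    rw [gL_sub_one, if_pos (mem_range_succ_iff.mp hl)]
    field_simp
  · intro j hj
    rw [gL_sub_one, if_neg (by simpa using hj), zero_pow two_ne_zero]

lemma add_sq_sum_div_card_sq_le {ι : Type*} {s : Finset ι} (hs : s.Nonempty) (V b : ι → ℝ)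
    {M : ℝ} (h : ∀ i ∈ s, 1 / (#s : ℝ) * V i + b i ^ 2 ≤ M) :
    (∑ i ∈ s, V i + (∑ i ∈ s, b i) ^ 2) / (#s : ℝ) ^ 2 ≤ M := by
  have hcard : (0 : ℝ) < #s := by exact_mod_cast hs.card_pos
  calc (∑ i ∈ s, V i + (∑ i ∈ s, b i) ^ 2) / (#s : ℝ) ^ 2
      ≤ (∑ i ∈ s, V i + #s * ∑ i ∈ s, b i ^ 2) / (#s : ℝ) ^ 2 := by
        gcongr; exact sq_sum_le_card_mul_sum_sq
    _ = 1 / (#s : ℝ) * ∑ i ∈ s, (1 / (#s : ℝ) * V i + b i ^ 2) := by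
        rw [sum_add_distrib, ← mul_sum]; field_simp
    _ ≤ 1 / (#s : ℝ) * (#s * M) := by
        gcongr; simpa using sum_le_card_nsmul s _ M h
    _ = M := by field_simp

section Moments

variable {Ω : Type*} [MeasurableSpace Ω] {μ : Measure Ω} [IsProbabilityMeasure μ]

lemma integral_sub_const_sq {X : Ω → ℝ} (hX : MemLp X 2 μ) (c : ℝ) :
    ∫ ω, (X ω - c) ^ 2 ∂μ = Var[X; μ] + (μ[X] - c) ^ 2 := by
  have hXc : MemLp (fun ω => X ω - c) 2 μ := hX.sub (memLp_const c)
  have hmean : μ[fun ω => X ω - c] = μ[X] - c := by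
    rw [integral_sub (hX.integrable one_le_two) (integrable_const c), integral_const]; simp
  rw [← variance_sub_const hX.aestronglyMeasurable c, variance_eq_sub hXc, hmean]
  simp only [Pi.pow_apply]
  ring

lemma variance_le_integral_sub_const_sq {X : Ω → ℝ} (hX : MemLp X 2 μ) (c : ℝ) :
    Var[X; μ] ≤ ∫ ω, (X ω - c) ^ 2 ∂μ := by
  rw [integral_sub_const_sq hX]
  exact le_add_of_nonneg_right (sq_nonneg _)

lemma integral_sum_sub_div_sq {ι : Type*} [Fintype ι] {X : ι → Ω → ℝ}
    (hX : ∀ i, MemLp (X i) 2 μ) (hindep : Pairwise fun i j => IndepFun (X i) (X j) μ) (c : ℝ) :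
    ∫ ω, ((∑ i, X i ω - c) / c) ^ 2 ∂μ
      = (∑ i, Var[X i; μ] + (∑ i, μ[X i] - c) ^ 2) / c ^ 2 := by
  have hsum : MemLp (∑ i, X i) 2 μ := memLp_finsetSum' _ fun i _ => hX i
  have hvar : Var[∑ i, X i; μ] = ∑ i, Var[X i; μ] :=
    IndepFun.variance_sum (fun i _ => hX i) fun i _ j _ hij => hindep hij
  have hmean : μ[∑ i, X i] = ∑ i, μ[X i] := by
    simp_rw [Finset.sum_apply]
    exact integral_finsetSum _ fun i _ => (hX i).integrable one_le_two
  rw [← hvar, ← hmean, ← integral_sub_const_sq hsum, ← integral_div]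
  simp_rw [div_pow, Finset.sum_apply]

end Moments

section Estimator

variable {Ω : Type*} [MeasurableSpace Ω] {μ : Measure Ω} {N : Ω → ℕ}

lemma memLp_gL_comp [IsFiniteMeasure μ] (L : ℕ) (a : ℕ → ℝ) (hN : Measurable N) :
    MemLp (fun ω => gL L a (N ω)) 2 μ :=
  MemLp.of_bound ((measurable_from_nat (f := gL L a)).comp hN).aestronglyMeasurable _
    (Filter.Eventually.of_forall fun ω => abs_gL_le L a (N ω))

lemma gL_comp_ae_eq_zero {L : ℕ} {a : ℕ → ℝ} (ha0 : a 0 = -1) (hN : ∀ᵐ ω ∂μ, N ω = 0) :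
    (fun ω => gL L a (N ω)) =ᵐ[μ] 0 := by
  filter_upwards [hN] with ω hω
  rw [hω, gL_zero ha0, Pi.zero_apply]

variable [IsProbabilityMeasure μ] {r : ℝ}

lemma integral_gL_comp_of_map_eq_poissonMeasure (L : ℕ) (a : ℕ → ℝ) (hN : Measurable N)
    (hr : 0 ≤ r) (hNr : μ.map N = poissonMeasure r.toNNReal) :
    ∫ ω, gL L a (N ω) ∂μ = 1 + Real.exp (-r) * P L a r := by
  have hint := (memLp_gL_comp (μ := μ) L a hN).integrable one_le_two
  calc ∫ ω, gL L a (N ω) ∂μ = ∫ ω, (gL L a (N ω) - 1) ∂μ + 1 := by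
        rw [integral_sub hint (integrable_const 1), integral_const, probReal_univ, one_smul,
          sub_add_cancel]
    _ = ∫ j, (gL L a j - 1) ∂poissonMeasure r.toNNReal + 1 := by
        rw [← hNr, integral_map hN.aemeasurable
          (measurable_from_nat (f := fun j => gL L a j - 1)).aestronglyMeasurable]
    _ = 1 + Real.exp (-r) * P L a r := by
        rw [integral_gL_sub_one_poissonMeasure, Real.coe_toNNReal r hr, add_comm]

lemma variance_gL_comp_le_of_map_eq_poissonMeasure (L : ℕ) (a : ℕ → ℝ) (hN : Measurable N)
    (hr : 0 ≤ r) (hNr : μ.map N = poissonMeasure r.toNNReal) :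
    Var[fun ω => gL L a (N ω); μ]
      ≤ ∑ l ∈ range (L + 1), Real.exp (-r) * a l ^ 2 * r ^ l * l.factorial := by
  refine (variance_le_integral_sub_const_sq (memLp_gL_comp L a hN) 1).trans_eq ?_
  rw [← Real.coe_toNNReal r hr, ← integral_gL_sub_one_sq_poissonMeasure, ← hNr]
  exact (integral_map (μ := μ) hN.aemeasurable
    (measurable_from_nat (f := fun j => (gL L a j - 1) ^ 2)).aestronglyMeasurable).symm

end Estimator

open Classical in
theorem stmt_19 {Ω : Type*} [MeasurableSpace Ω] (μ : Measure Ω) [IsProbabilityMeasure μ]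
    {I : Type*} [Fintype I] (L : ℕ) (a : ℕ → ℝ) (ha0 : a 0 = -1)
    (n k : ℝ) (hn : 0 < n) (hk : 0 < k)
    (lam : I → ℝ) (hlam : ∀ i, lam i = 0 ∨ lam i ∈ Set.Icc (n / k) n)
    (hS : 1 ≤ (Finset.univ.filter fun i : I => 0 < lam i).card)
    (N : I → Ω → ℕ) (hmeas : ∀ i, Measurable (N i))
    (hindep : iIndepFun N μ)
    (hpois : ∀ i, 0 < lam i → μ.map (N i) = poissonMeasure (lam i).toNNReal)
    (hzero : ∀ i, lam i = 0 → ∀ᵐ ω ∂μ, N i ω = 0) :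
    (∫ ω, (((∑ i : I, gL L a (N i ω)) -
          ((Finset.univ.filter fun i : I => 0 < lam i).card : ℝ)) /
        ((Finset.univ.filter fun i : I => 0 < lam i).card : ℝ)) ^ 2 ∂μ)
      ≤ sSup ((fun x : ℝ =>
          (1 / ((Finset.univ.filter fun i : I => 0 < lam i).card : ℝ)) *
              (∑ l ∈ range (L + 1),
                Real.exp (-x) * (a l) ^ 2 * x ^ l * (l.factorial : ℝ))
            + (Real.exp (-x) * P L a x) ^ 2) '' Set.Icc (n / k) n) := by
  set pos := univ.filter fun i : I => 0 < lam i
  set X : I → Ω → ℝ := fun i ω => gL L a (N i ω)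
  have hpos : ∀ i ∈ pos, 0 < lam i := fun i hi => (mem_filter.mp hi).2
  have hX_zero : ∀ i ∉ pos, X i =ᵐ[μ] 0 := fun i hi =>
    gL_comp_ae_eq_zero ha0 <| hzero i <| (hlam i).resolve_right fun h =>
      hi (mem_filter.mpr ⟨mem_univ i, (div_pos hn hk).trans_le h.1⟩)
  have hvar : ∑ i, Var[X i; μ] ≤ ∑ i ∈ pos,
      ∑ l ∈ range (L + 1), Real.exp (-lam i) * a l ^ 2 * lam i ^ l * l.factorial := by
    rw [← sum_subset (subset_univ pos) fun i _ hi => by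
      rw [variance_congr (hX_zero i hi), variance_zero]]
    exact sum_le_sum fun i hi => variance_gL_comp_le_of_map_eq_poissonMeasure L a (hmeas i)
      (hpos i hi).le (hpois i (hpos i hi))
  have hbias : ∑ i, μ[X i] - #pos = ∑ i ∈ pos, Real.exp (-lam i) * P L a (lam i) := by
    rw [← sum_subset (subset_univ pos) fun i _ hi => integral_eq_zero_of_ae (hX_zero i hi),
      sum_congr rfl fun i hi => integral_gL_comp_of_map_eq_poissonMeasure L a (hmeas i)
        (hpos i hi).le (hpois i (hpos i hi))]
    simp [sum_add_distrib]
  rw [integral_sum_sub_div_sq (X := X) (fun i => memLp_gL_comp L a (hmeas i))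
    (fun i j hij => (hindep.indepFun hij).comp (measurable_from_nat (f := gL L a))
      (measurable_from_nat (f := gL L a))), hbias]
  refine (div_le_div_of_nonneg_right (add_le_add hvar le_rfl) (sq_nonneg _)).trans
    (add_sq_sum_div_card_sq_le (card_pos.mp hS) _ _ fun i hi => ?_)
  exact le_csSup (isCompact_Icc.image (by fun_prop)).bddAbove
    (Set.mem_image_of_mem _ ((hlam i).resolve_left (hpos i hi).ne'))
end
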